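/- Let X and Y be edge-disjoint matchings, each with at least one edge, of sizes x and y respectively. Suppose Y has exactly y₁ edges that are adjacent to exactly one edge of X and exactly y₂ edges that are adjacent to exactly two edges of X. Let ℓ_Y be an ordering of Y in which the y₂ edges adjacent to two edges of X receive the largest labels. Then there is an ordering ℓ_X of X such that ms(ℓ_X ∨ ℓ_Y) ≥ min{ x, x + y − y₁ − 2y₂ }. -/

import Mathlib

open SimpleGraph

/-- Two edges are adjacent if they are distinct and share a vertex. -/
def EdgesAdj {V : Type*} (e e' : Sym2 V) : Prop :=
  e ≠ e' ∧ ∃ v : V, v ∈ e ∧ v ∈ e'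

/-- `ms` of an ordering of a graph, the ordering being given as the list of edges
in increasing label order: the largest `s ∈ {1,…,m}` such that any ordered pair of
adjacent edges `(e,e')` with `ℓ(e) < ℓ(e')` has forward distance at least `s`. -/
noncomputable def msList {V : Type*} (L : List (Sym2 V)) : ℕ :=
  sSup {s | 1 ≤ s ∧ s ≤ L.length ∧ ∀ i j e e', i < j →
    L[i]? = some e → L[j]? = some e' → EdgesAdj e e' → s ≤ j - i}

/-- `cms` of an ordering of a graph: the largest `s ∈ {1,…,m}` such that every pair of
adjacent edges is at cyclic distance at least `s`. -/
noncomputable def cmsList {V : Type*} (L : List (Sym2 V)) : ℕ :=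
  sSup {s | 1 ≤ s ∧ s ≤ L.length ∧ ∀ i j e e', i < j →
    L[i]? = some e → L[j]? = some e' → EdgesAdj e e' →
    s ≤ min (j - i) (L.length - (j - i))}

/-- `L` is an ordering of `G`: it lists every edge of `G` exactly once. -/
def IsOrdering {V : Type*} (G : SimpleGraph V) (L : List (Sym2 V)) : Prop :=
  L.Nodup ∧ ∀ e, e ∈ L ↔ e ∈ G.edgeSet

/-- Cyclic matching sequenceability of a graph: the maximum of `cmsList` over orderings. -/
noncomputable def cms {V : Type*} (G : SimpleGraph V) : ℕ :=
  sSup {k | ∃ L, IsOrdering G L ∧ cmsList L = k}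

/-- Number of edges of a graph. -/
noncomputable def numEdges {V : Type*} (G : SimpleGraph V) : ℕ :=
  Nat.card G.edgeSet

/-- The chromatic index: the least number of colours in a proper edge colouring. -/
noncomputable def chromaticIndex {V : Type*} (G : SimpleGraph V) : ℕ :=
  sInf {c | ∃ f : G.edgeSet → Fin c, ∀ e e' : G.edgeSet, EdgesAdj e.1 e'.1 → f e ≠ f e'}

/-- The edge set of `G` forms a matching (no two distinct edges share a vertex). -/
def IsMatchingGraph {V : Type*} (G : SimpleGraph V) : Prop :=
  ∀ e ∈ G.edgeSet, ∀ e' ∈ G.edgeSet, ¬ EdgesAdj e e'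

/-- `G` is regular of degree `d`. -/
def IsRegularGraph {V : Type*} (G : SimpleGraph V) (d : ℕ) : Prop :=
  ∀ v : V, Nat.card (G.neighborSet v) = d

/-- A finite set of edges of `G` forming a matching. -/
def IsMatchingSet {V : Type*} (G : SimpleGraph V) (M : Finset (Sym2 V)) : Prop :=
  ↑M ⊆ G.edgeSet ∧ ∀ e ∈ M, ∀ e' ∈ M, ¬ EdgesAdj e e'

/-- The matching number of a graph. -/
noncomputable def matchingNumber {V : Type*} (G : SimpleGraph V) : ℕ :=
  sSup {k | ∃ M : Finset (Sym2 V), IsMatchingSet G M ∧ M.card = k}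

/-!
Order `X` by the position in `ℓ_Y` of the first edge of `Y` adjacent to it. If the `i`-th edge of
`X` meets the `k`-th edge of `Y` (counting from `0`), then each of the first `i + 1` edges of `X`
meets one of the first `k + 1` edges of `Y`, so `i + 1` is at most the number `S` of adjacencies
between `X` and these `k + 1` edges. Every edge of `Y` meets at most two edges of `X`, and those
meeting two come last in `ℓ_Y`, so `S ≤ k + 1` or `S ≤ (k + 1) + (y₁ + 2y₂ - y)`. Either way the
distance `x + k - i` between the two edges is at least `min{x, x + y - y₁ - 2y₂}`; edges inside
`X` or inside `Y` are never adjacent.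
-/

namespace List

theorem countP_le_sum_map_countP {α β : Type*} {l : List α} {m : List β} {p : α → Bool}
    {q : β → α → Bool} (h : ∀ a ∈ l, p a → ∃ b ∈ m, q b a) :
    l.countP p ≤ (m.map fun b => l.countP (q b)).sum := by
  induction l with
  | nil => simp
  | cons a l ih =>
    simp only [countP_cons, sum_map_add]
    gcongr
    · exact ih fun a' ha' => h a' (mem_cons_of_mem a ha')
    · split_ifs with hpa
      · obtain ⟨b, hb, hqb⟩ := h a mem_cons_self hpa
        simpa [hqb] using le_sum_of_mem (mem_map_of_mem (f := fun b => if q b a then 1 else 0) hb)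
      · exact Nat.zero_le _

theorem Pairwise.succ_le_countP {α : Type*} {f : α → ℕ} {l : List α}
    (hl : l.Pairwise fun a b => f a ≤ f b) {i k : ℕ} (hi : i < l.length) (hk : f l[i] ≤ k) :
    i + 1 ≤ l.countP fun a => f a ≤ k := by
  have htake : (l.take (i + 1)).countP (fun a => f a ≤ k) = i + 1 := by
    rw [countP_eq_length.mpr, length_take_of_le hi]
    intro a ha
    obtain ⟨j, hj, rfl⟩ := mem_take_iff_getElem.mp ha
    rcases Nat.lt_or_ge j i with hji | hji
    · simpa using (pairwise_iff_getElem.mp hl j i _ hi hji).trans hk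
    · simpa [show j = i by omega] using hk
  exact htake ▸ (take_sublist _ _).countP_le

theorem sum_take_le_of_two_suffix {l : List ℕ} (hl : ∀ a ∈ l, a ≤ 2)
    (htwo : ∀ i j (hij : i < j) (hj : j < l.length), l[i] = 2 → l[j] = 2) (n : ℕ) :
    ((l.take n).sum : ℤ) ≤ n + max 0 ((l.sum : ℤ) - l.length) := by
  by_cases h : 2 ∈ l.take n
  · obtain ⟨i, hi, hi2⟩ := mem_take_iff_getElem.mp h
    have hdrop : (l.drop n).sum = (l.drop n).length * 2 := by
      refine sum_eq_card_nsmul _ _ fun a ha => ?_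
      obtain ⟨j, hj, rfl⟩ := mem_iff_getElem.mp ha
      rw [getElem_drop]
      exact htwo i _ (by omega) _ hi2
    have := sum_take_add_sum_drop l n
    rw [length_drop] at hdrop
    omega
  · have hle : ∀ a ∈ l.take n, a ≤ 1 := fun a ha =>
      Nat.le_of_lt_succ (lt_of_le_of_ne (hl a (mem_of_mem_take ha)) (by rintro rfl; exact h ha))
    have hsum := sum_le_card_nsmul _ _ hle
    rw [smul_eq_mul, mul_one] at hsum
    have := length_take_le n l
    omega

theorem sum_eq_count_one_add_two_mul_count_two {l : List ℕ} (hl : ∀ a ∈ l, a ≤ 2) :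
    l.sum = l.count 1 + 2 * l.count 2 := by
  induction l with
  | nil => simp
  | cons a l ih =>
    have ha := hl a mem_cons_self
    rw [sum_cons, ih fun b hb => hl b (mem_cons_of_mem a hb), count_cons, count_cons]
    interval_cases a <;> simp <;> omega

end List

section

variable {V : Type*}

theorem EdgesAdj.symm {e f : Sym2 V} (h : EdgesAdj e f) : EdgesAdj f e :=
  ⟨h.1.symm, h.2.imp fun _ hv => ⟨hv.2, hv.1⟩⟩

noncomputable def adjCount (G : SimpleGraph V) (e : Sym2 V) : ℕ :=
  Nat.card {f : Sym2 V // f ∈ G.edgeSet ∧ EdgesAdj e f}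

theorem IsMatchingGraph.adjCount_le_two {G : SimpleGraph V} (hG : IsMatchingGraph G)
    (e : Sym2 V) : adjCount G e ≤ 2 := by
  classical
  induction e using Sym2.ind with
  | _ u v =>
    have hinj : Function.Injective
        fun f : {f : Sym2 V // f ∈ G.edgeSet ∧ EdgesAdj s(u, v) f} => decide (u ∈ f.1) := by
      rintro ⟨f, hf, hfe⟩ ⟨g, hg, hge⟩ hfg
      obtain ⟨w, hw, hwf⟩ := hfe.2
      obtain ⟨w', hw', hwg⟩ := hge.2
      simp only [decide_eq_decide] at hfg
      obtain ⟨z, hzf, hzg⟩ : ∃ z, z ∈ f ∧ z ∈ g := by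
        rcases Sym2.mem_iff.mp hw with rfl | rfl <;> rcases Sym2.mem_iff.mp hw' with rfl | rfl
        exacts [⟨_, hwf, hwg⟩, ⟨_, hwf, hfg.mp hwf⟩, ⟨_, hfg.mpr hwg, hwg⟩, ⟨_, hwf, hwg⟩]
      exact Subtype.ext (by_contra fun hne => hG f hf g hg ⟨hne, z, hzf, hzg⟩)
    simpa [adjCount] using Nat.card_le_card_of_injective _ hinj

theorem IsOrdering.countP_eq_natCard {G : SimpleGraph V} {L : List (Sym2 V)}
    (hL : IsOrdering G L) (p : Sym2 V → Prop) [DecidablePred p] :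
    L.countP (fun e => p e) = Nat.card {e : Sym2 V // e ∈ G.edgeSet ∧ p e} := by
  classical
  rw [List.countP_eq_length_filter, ← List.toFinset_card_of_nodup (hL.1.filter _),
    ← Nat.card_eq_finsetCard]
  exact Nat.card_congr (Equiv.subtypeEquivRight fun e => by simp [hL.2])

theorem IsOrdering.length_eq {G : SimpleGraph V} {L : List (Sym2 V)} (hL : IsOrdering G L) :
    L.length = numEdges G := by
  simpa [numEdges, Nat.card_coe_set_eq] using hL.countP_eq_natCard fun _ => True

theorem IsMatchingGraph.sum_map_adjCount {X G : SimpleGraph V} {L : List (Sym2 V)}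
    (hX : IsMatchingGraph X) (hL : IsOrdering G L) :
    (L.map (adjCount X)).sum = Nat.card {e : Sym2 V // e ∈ G.edgeSet ∧ adjCount X e = 1}
      + 2 * Nat.card {e : Sym2 V // e ∈ G.edgeSet ∧ adjCount X e = 2} := by
  classical
  have hcount : ∀ n, (L.map (adjCount X)).count n =
      Nat.card {e : Sym2 V // e ∈ G.edgeSet ∧ adjCount X e = n} := fun n => by
    rw [← hL.countP_eq_natCard fun e => adjCount X e = n, List.count_eq_countP, List.countP_map]
    simp only [Function.comp_def, beq_eq_decide]
  rw [List.sum_eq_count_one_add_two_mul_count_two, hcount, hcount]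
  intro a ha
  obtain ⟨e, -, rfl⟩ := List.mem_map.mp ha
  exact hX.adjCount_le_two e

theorem IsMatchingGraph.not_edgesAdj_of_mem {G : SimpleGraph V} {L : List (Sym2 V)}
    (hG : IsMatchingGraph G) (hL : IsOrdering G L) : ∀ e ∈ L, ∀ e' ∈ L, ¬EdgesAdj e e' :=
  fun e he e' he' => hG e ((hL.2 e).mp he) e' ((hL.2 e').mp he')

theorem exists_isOrdering_pairwise_le {G : SimpleGraph V} (hG : G.edgeSet.Finite)
    (f : Sym2 V → ℕ) : ∃ L, IsOrdering G L ∧ L.Pairwise fun a b => f a ≤ f b := by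
  refine ⟨hG.toFinset.toList.mergeSort fun a b => f a ≤ f b, ⟨?_, fun e => ?_⟩, ?_⟩
  · exact (List.mergeSort_perm _ _).nodup_iff.mpr (Finset.nodup_toList _)
  · simp [(List.mergeSort_perm _ _).mem_iff]
  · simpa using List.pairwise_mergeSort (le := fun a b => f a ≤ f b)
      (fun a b c hab hbc => by simp only [decide_eq_true_eq] at *; omega)
      (fun a b => by simp only [Bool.or_eq_true, decide_eq_true_eq]; omega) _

open Classical in
/-- Equal to `L.length` when no edge of `L` is adjacent to `f`. -/
noncomputable def firstAdjIdx (L : List (Sym2 V)) (f : Sym2 V) : ℕ :=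
  L.findIdx fun e => EdgesAdj e f

theorem succ_le_sum_take_map_adjCount {X : SimpleGraph V} {LX LY : List (Sym2 V)}
    (hLX : IsOrdering X LX) (hsorted : LX.Pairwise fun a b => firstAdjIdx LY a ≤ firstAdjIdx LY b)
    {i k : ℕ} (hi : i < LX.length) (hk : k < LY.length) (hadj : EdgesAdj LY[k] LX[i]) :
    i + 1 ≤ ((LY.map (adjCount X)).take (k + 1)).sum := by
  classical
  have hfirst : firstAdjIdx LY LX[i] ≤ k := by
    by_contra! h
    simpa [hadj] using List.not_of_lt_findIdx h
  have hcount : (fun e => LX.countP fun f => EdgesAdj e f) = adjCount X :=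
    funext fun e => hLX.countP_eq_natCard _
  rw [← List.map_take, ← hcount]
  refine (hsorted.succ_le_countP hi hfirst).trans (List.countP_le_sum_map_countP fun f _ hf => ?_)
  have hf : firstAdjIdx LY f < LY.length := by simp only [decide_eq_true_eq] at hf; omega
  refine ⟨LY[firstAdjIdx LY f], ?_, List.findIdx_getElem (w := hf)⟩
  exact List.mem_take_iff_getElem.mpr ⟨_, by simp at *; omega, rfl⟩

theorem le_msList_append {L₀ L₁ : List (Sym2 V)} {M : ℕ}
    (h₀ : ∀ e ∈ L₀, ∀ e' ∈ L₀, ¬EdgesAdj e e') (h₁ : ∀ e ∈ L₁, ∀ e' ∈ L₁, ¬EdgesAdj e e')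
    (hM : 1 ≤ M) (hM₀ : M ≤ L₀.length)
    (h : ∀ i k (hi : i < L₀.length) (hk : k < L₁.length),
      EdgesAdj L₀[i] L₁[k] → M + i ≤ L₀.length + k) :
    M ≤ msList (L₀ ++ L₁) := by
  refine le_csSup ⟨(L₀ ++ L₁).length, fun _ hs => hs.2.1⟩ ⟨hM, by simp; omega, ?_⟩
  intro i j e e' hij hi hj hadj
  obtain ⟨hj', rfl⟩ := List.getElem?_eq_some_iff.mp hj
  obtain ⟨hi', rfl⟩ := List.getElem?_eq_some_iff.mp hi
  rw [List.length_append] at hi' hj'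
  rcases Nat.lt_or_ge j L₀.length with hj₀ | hj₀
  · rw [List.getElem_append_left (by omega), List.getElem_append_left hj₀] at hadj
    exact absurd hadj (h₀ _ (List.getElem_mem _) _ (List.getElem_mem _))
  rcases Nat.lt_or_ge i L₀.length with hi₀ | hi₀
  · rw [List.getElem_append_left hi₀, List.getElem_append_right hj₀] at hadj
    have := h i (j - L₀.length) hi₀ (by omega) hadj
    omega
  · rw [List.getElem_append_right hi₀, List.getElem_append_right hj₀] at hadj
    exact absurd hadj (h₁ _ (List.getElem_mem _) _ (List.getElem_mem _))

end

theorem exists_ordering_msList_ge_min_general {V : Type*} [Fintype V] (X Y : SimpleGraph V)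
    (x y y1 y2 : ℕ) (LY : List (Sym2 V))
    (hX : IsMatchingGraph X) (hY : IsMatchingGraph Y)
    (hx : numEdges X = x) (hy : numEdges Y = y)
    (hy1 : Nat.card {e : Sym2 V // e ∈ Y.edgeSet ∧
      Nat.card {f : Sym2 V // f ∈ X.edgeSet ∧ EdgesAdj e f} = 1} = y1)
    (hy2 : Nat.card {e : Sym2 V // e ∈ Y.edgeSet ∧
      Nat.card {f : Sym2 V // f ∈ X.edgeSet ∧ EdgesAdj e f} = 2} = y2)
    (hLY : IsOrdering Y LY)
    (hlast : ∀ (i j : ℕ) (e e' : Sym2 V), i < j → LY[i]? = some e → LY[j]? = some e' →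
      Nat.card {f : Sym2 V // f ∈ X.edgeSet ∧ EdgesAdj e f} = 2 →
      Nat.card {f : Sym2 V // f ∈ X.edgeSet ∧ EdgesAdj e' f} = 2) :
    ∃ LX : List (Sym2 V), IsOrdering X LX ∧
      min (x : ℤ) ((x : ℤ) + (y : ℤ) - (y1 : ℤ) - 2 * (y2 : ℤ))
        ≤ (msList (LX ++ LY) : ℤ) := by
  classical
  obtain ⟨LX, hLX, hsorted⟩ := exists_isOrdering_pairwise_le X.edgeSet.toFinite (firstAdjIdx LY)
  refine ⟨LX, hLX, ?_⟩
  have hsum : (LY.map (adjCount X)).sum = y1 + 2 * y2 := by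
    rw [← hy1, ← hy2]
    exact hX.sum_map_adjCount hLY
  have hprefix := List.sum_take_le_of_two_suffix (l := LY.map (adjCount X))
    (fun _ ha => by obtain ⟨e, -, rfl⟩ := List.mem_map.mp ha; exact hX.adjCount_le_two e)
    fun i j hij hj h2 => by
      simp only [List.getElem_map, List.length_map] at h2 hj ⊢
      exact hlast i j _ _ hij (List.getElem?_eq_getElem (by omega)) (List.getElem?_eq_getElem hj) h2
  rw [hsum, List.length_map, hLY.length_eq, hy] at hprefix
  have hxlen : LX.length = x := hLX.length_eq.trans hx
  have hylen : LY.length = y := hLY.length_eq.trans hy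
  set m := min (x : ℤ) (x + y - y1 - 2 * y2)
  have hm₁ : m ≤ x := min_le_left _ _
  have hm₂ : m ≤ x + y - y1 - 2 * y2 := min_le_right _ _
  rcases le_or_gt m 0 with hm | hm
  · exact hm.trans (Int.natCast_nonneg _)
  refine (Int.self_le_toNat m).trans (Nat.cast_le.mpr (le_msList_append
    (hX.not_edgesAdj_of_mem hLX) (hY.not_edgesAdj_of_mem hLY) (by omega) (by omega)
    fun i k hi hk hadj => ?_))
  have hi := succ_le_sum_take_map_adjCount hLX hsorted hi hk hadj.symm
  have := hprefix (k + 1)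
  omega

/-- Lemma: let `X` and `Y` be edge-disjoint matchings of sizes `x` and `y`, where `Y` has
exactly `y₁` edges adjacent to exactly one edge of `X` and exactly `y₂` edges adjacent to
exactly two edges of `X`.  If `ℓ_Y` is an ordering of `Y` in which the `y₂` edges adjacent
to two edges of `X` are the last to occur, then there is an ordering `ℓ_X` of `X` with
`ms(ℓ_X ∨ ℓ_Y) ≥ min{x, x + y - y₁ - 2y₂}`. -/
theorem exists_ordering_msList_ge_min {V : Type*} [Fintype V] (X Y : SimpleGraph V)
    (x y y1 y2 : ℕ) (LY : List (Sym2 V))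
    (hX : IsMatchingGraph X) (hY : IsMatchingGraph Y)
    (hdisj : Disjoint X.edgeSet Y.edgeSet)
    (hXne : X.edgeSet.Nonempty) (hYne : Y.edgeSet.Nonempty)
    (hx : numEdges X = x) (hy : numEdges Y = y)
    (hy1 : Nat.card {e : Sym2 V // e ∈ Y.edgeSet ∧
      Nat.card {f : Sym2 V // f ∈ X.edgeSet ∧ EdgesAdj e f} = 1} = y1)
    (hy2 : Nat.card {e : Sym2 V // e ∈ Y.edgeSet ∧
      Nat.card {f : Sym2 V // f ∈ X.edgeSet ∧ EdgesAdj e f} = 2} = y2)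
    (hLY : IsOrdering Y LY)
    (hlast : ∀ (i j : ℕ) (e e' : Sym2 V), i < j → LY[i]? = some e → LY[j]? = some e' →
      Nat.card {f : Sym2 V // f ∈ X.edgeSet ∧ EdgesAdj e f} = 2 →
      Nat.card {f : Sym2 V // f ∈ X.edgeSet ∧ EdgesAdj e' f} = 2) :
    ∃ LX : List (Sym2 V), IsOrdering X LX ∧
      min (x : ℤ) ((x : ℤ) + (y : ℤ) - (y1 : ℤ) - 2 * (y2 : ℤ))
        ≤ (msList (LX ++ LY) : ℤ) :=
  exists_ordering_msList_ge_min_general X Y x y y1 y2 LY hX hY hx hy hy1 hy2 hLY hlast
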